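/- Le Cam's inequality: Let ε_1, ..., ε_m be independent Bernoulli random variables with P(ε_j = 1) = p_j, and let Σ_m = ε_1 + ... + ε_m and λ = p_1 + ... + p_m. Then the total variation-type distance satisfies ∑_{k=0}^∞ |P(Σ_m = k) − e^{−λ} λ^k / k!| ≤ 2 ∑_{j=1}^m p_j². -/

import Mathlib

/-!
The law of `Σ_m` is the convolution of the Bernoulli laws of the `ε_j`, and the Poisson law with
parameter `λ` is the convolution of the Poisson laws with parameters `p_j`. Since
`a ∗ u - b ∗ v = (a - b) ∗ u + b ∗ (u - v)`, the `ℓ¹` distance between convolutions of probability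
distributions on `ℕ` is subadditive, so it suffices to compare a single Bernoulli law with the
Poisson law of the same mean `p`. Their distance is
`(e^{-p} - 1 + p) + p (1 - e^{-p}) + (1 - e^{-p} - p e^{-p}) = 2 p (1 - e^{-p}) ≤ 2 p²`.
-/

open MeasureTheory ProbabilityTheory
open scoped NNReal
open Finset Real

lemma summable_abs_sum_antidiagonal_mul {a b : ℕ → ℝ} (ha : Summable fun n ↦ |a n|)
    (hb : Summable fun n ↦ |b n|) :
    Summable fun n ↦ |∑ x ∈ antidiagonal n, a x.1 * b x.2| := by
  simpa only [Real.norm_eq_abs] using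
    summable_norm_sum_mul_antidiagonal_of_summable_norm (f := a) (g := b)
      (by simpa only [Real.norm_eq_abs] using ha) (by simpa only [Real.norm_eq_abs] using hb)

lemma tsum_abs_sum_antidiagonal_mul_le {a b : ℕ → ℝ} (ha : Summable fun n ↦ |a n|)
    (hb : Summable fun n ↦ |b n|) :
    ∑' n, |∑ x ∈ antidiagonal n, a x.1 * b x.2| ≤ (∑' n, |a n|) * ∑' n, |b n| := by
  have ha' : Summable fun n ↦ ‖|a n|‖ := by simpa using ha
  have hb' : Summable fun n ↦ ‖|b n|‖ := by simpa using hb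
  have hle : ∀ n, |∑ x ∈ antidiagonal n, a x.1 * b x.2| ≤
      ∑ x ∈ antidiagonal n, |a x.1| * |b x.2| :=
    fun n ↦ (abs_sum_le_sum_abs _ _).trans_eq (sum_congr rfl fun x _ ↦ abs_mul _ _)
  rw [tsum_mul_tsum_eq_tsum_sum_antidiagonal_of_summable_norm ha' hb']
  exact Summable.tsum_le_tsum hle (summable_abs_sum_antidiagonal_mul ha hb)
    (summable_norm_sum_mul_antidiagonal_of_summable_norm ha' hb').of_norm

lemma tsum_abs_sub_sum_antidiagonal_mul_le {a b u v : ℕ → ℝ}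
    (hab : Summable fun n ↦ |a n - b n|) (hb : Summable fun n ↦ |b n|)
    (hu : Summable fun n ↦ |u n|) (huv : Summable fun n ↦ |u n - v n|) :
    ∑' n, |∑ x ∈ antidiagonal n, a x.1 * u x.2 - ∑ x ∈ antidiagonal n, b x.1 * v x.2| ≤
      (∑' n, |a n - b n|) * (∑' n, |u n|) + (∑' n, |b n|) * ∑' n, |u n - v n| := by
  have hsplit : ∀ n, ∑ x ∈ antidiagonal n, a x.1 * u x.2 - ∑ x ∈ antidiagonal n, b x.1 * v x.2 =
      ∑ x ∈ antidiagonal n, (a x.1 - b x.1) * u x.2 +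
        ∑ x ∈ antidiagonal n, b x.1 * (u x.2 - v x.2) := by
    intro n
    rw [← sum_sub_distrib, ← sum_add_distrib]
    exact sum_congr rfl fun x _ ↦ by ring
  have h₁ := summable_abs_sum_antidiagonal_mul hab hu
  have h₂ := summable_abs_sum_antidiagonal_mul hb huv
  simp_rw [hsplit]
  calc _ ≤ ∑' n, (|∑ x ∈ antidiagonal n, (a x.1 - b x.1) * u x.2| +
          |∑ x ∈ antidiagonal n, b x.1 * (u x.2 - v x.2)|) :=
        Summable.tsum_le_tsum (fun n ↦ abs_add_le _ _)
          (.of_nonneg_of_le (fun _ ↦ abs_nonneg _) (fun n ↦ abs_add_le _ _) (h₁.add h₂))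
          (h₁.add h₂)
    _ ≤ _ := by
      rw [h₁.tsum_add h₂]
      exact add_le_add (tsum_abs_sum_antidiagonal_mul_le hab hu)
        (tsum_abs_sum_antidiagonal_mul_le hb huv)

namespace MeasureTheory

lemma hasSum_measureReal_singleton {α : Type*} [MeasurableSpace α] [Countable α]
    [MeasurableSingletonClass α] (μ : Measure α) [IsFiniteMeasure μ] :
    HasSum (fun a ↦ μ.real {a}) (μ.real Set.univ) := by
  have h := μ.tsum_indicator_apply_singleton Set.univ MeasurableSet.univ
  simp only [Set.indicator_univ] at h
  rw [measureReal_def, ← h, ENNReal.tsum_toReal_eq (fun _ ↦ measure_ne_top _ _)]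
  exact (ENNReal.summable_toReal (h ▸ measure_ne_top μ _)).hasSum

lemma Measure.conv_real_singleton {M : Type*} [AddMonoid M] [HasAntidiagonal M]
    [MeasurableSpace M] [MeasurableSingletonClass M] [MeasurableAdd₂ M]
    (μ ν : Measure M) [SigmaFinite μ] [SigmaFinite ν] (n : M) :
    (μ ∗ ν).real {n} = ∑ x ∈ antidiagonal n, μ.real {x.1} * ν.real {x.2} := by
  have hpre : (fun x : M × M ↦ x.1 + x.2) ⁻¹' {n} = ↑(antidiagonal n) := by
    ext x; simp
  rw [Measure.conv, map_measureReal_apply (by fun_prop) (measurableSet_singleton n), hpre,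
    ← sum_measureReal_singleton]
  refine Finset.sum_congr rfl fun x _ ↦ ?_
  rw [← Set.singleton_prod_singleton, measureReal_prod_prod]

end MeasureTheory

lemma poissonMeasure_zero : poissonMeasure 0 = Measure.dirac 0 := by
  refine Measure.ext_of_singleton fun n ↦ ?_
  rw [poissonMeasure_singleton]
  cases n <;> simp

lemma poissonMeasure_real_singleton_zero (r : ℝ≥0) : (poissonMeasure r).real {0} = exp (-r) := by
  simp [poissonMeasure_real_singleton]

lemma poissonMeasure_real_singleton_one (r : ℝ≥0) :
    (poissonMeasure r).real {1} = r * exp (-r) := by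
  simp [poissonMeasure_real_singleton, mul_comm]

noncomputable def natL1Dist (μ ν : Measure ℕ) : ℝ := ∑' k, |μ.real {k} - ν.real {k}|

lemma summable_abs_measureReal_singleton_sub (μ ν : Measure ℕ) [IsFiniteMeasure μ]
    [IsFiniteMeasure ν] : Summable fun k ↦ |μ.real {k} - ν.real {k}| :=
  ((hasSum_measureReal_singleton μ).summable.sub (hasSum_measureReal_singleton ν).summable).abs

lemma tsum_abs_measureReal_singleton (μ : Measure ℕ) [IsProbabilityMeasure μ] :
    ∑' k, |μ.real {k}| = 1 := by
  simp_rw [abs_of_nonneg measureReal_nonneg]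
  simpa using (hasSum_measureReal_singleton μ).tsum_eq

lemma natL1Dist_conv_le (μ μ' ν ν' : Measure ℕ) [IsFiniteMeasure μ] [IsProbabilityMeasure μ']
    [IsProbabilityMeasure ν] [IsFiniteMeasure ν'] :
    natL1Dist (μ ∗ ν) (μ' ∗ ν') ≤ natL1Dist μ μ' + natL1Dist ν ν' := by
  have h := tsum_abs_sub_sum_antidiagonal_mul_le (summable_abs_measureReal_singleton_sub μ μ')
    (hasSum_measureReal_singleton μ').summable.abs
    (hasSum_measureReal_singleton ν).summable.abs (summable_abs_measureReal_singleton_sub ν ν')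
  rw [tsum_abs_measureReal_singleton, tsum_abs_measureReal_singleton, mul_one, one_mul] at h
  simpa only [natL1Dist, Measure.conv_real_singleton] using h

lemma natL1Dist_poissonMeasure_le {μ : Measure ℕ} [IsProbabilityMeasure μ]
    (hμ : ∀ k, μ {k + 2} = 0) {r : ℝ≥0} (hr : μ.real {1} = r) :
    natL1Dist μ (poissonMeasure r) ≤ 2 * r ^ 2 := by
  have hμ' : ∀ k, μ.real {k + 2} = 0 := fun k ↦ by simp [measureReal_def, hμ]
  have hμ0 : μ.real {0} = 1 - r := by
    have h := (hasSum_measureReal_singleton μ).tsum_eq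
    rw [← (hasSum_measureReal_singleton μ).summable.sum_add_tsum_nat_add 2] at h
    simp only [hμ', tsum_zero, sum_range_succ, sum_range_zero, hr, probReal_univ] at h
    linarith
  have htail : ∑' k, (poissonMeasure r).real {k + 2} = 1 - exp (-r) - r * exp (-r) := by
    have hpo := hasSum_measureReal_singleton (poissonMeasure r)
    have h := hpo.tsum_eq
    rw [← hpo.summable.sum_add_tsum_nat_add 2] at h
    simp only [sum_range_succ, sum_range_zero, poissonMeasure_real_singleton_zero,
      poissonMeasure_real_singleton_one, probReal_univ] at h
    linarith
  have hfar : ∀ k, |μ.real {k + 2} - (poissonMeasure r).real {k + 2}| =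
      (poissonMeasure r).real {k + 2} := fun k ↦ by
    rw [hμ', zero_sub, abs_neg, abs_of_nonneg measureReal_nonneg]
  rw [natL1Dist, ← (summable_abs_measureReal_singleton_sub _ _).sum_add_tsum_nat_add 2]
  simp only [hfar, htail, sum_range_succ, sum_range_zero, zero_add, hμ0, hr,
    poissonMeasure_real_singleton_zero, poissonMeasure_real_singleton_one]
  have hexp : 1 - r ≤ exp (-r) := by linarith [add_one_le_exp (-r)]
  have hexp_le : exp (-r) ≤ 1 := exp_le_one_iff.mpr (by simp)
  rw [abs_of_nonpos (by linarith), abs_of_nonneg (by nlinarith [r.2])]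
  nlinarith [mul_le_mul_of_nonneg_left hexp r.2]

section RandomVariables

variable {Ω : Type*} [MeasurableSpace Ω] {P : Measure Ω} [IsProbabilityMeasure P]

lemma natL1Dist_map_poissonMeasure_le {X : Ω → ℕ} (hX : Measurable X)
    (hX01 : ∀ ω, X ω = 0 ∨ X ω = 1) {r : ℝ≥0} (hr : (P {ω | X ω = 1}).toReal = r) :
    natL1Dist (P.map X) (poissonMeasure r) ≤ 2 * r ^ 2 := by
  have := Measure.isProbabilityMeasure_map (μ := P) hX.aemeasurable
  refine natL1Dist_poissonMeasure_le (fun k ↦ ?_) ?_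
  · rw [Measure.map_apply hX (measurableSet_singleton _)]
    convert measure_empty (μ := P)
    refine Set.eq_empty_of_forall_notMem fun ω hω ↦ ?_
    rcases hX01 ω with h | h <;> simp [h] at hω
  · rwa [map_measureReal_apply hX (measurableSet_singleton _)]

lemma natL1Dist_map_sum_poissonMeasure_le {ι : Type*} {X : ι → Ω → ℕ}
    (hX : ∀ j, Measurable (X j)) (hind : iIndepFun X P) (r : ι → ℝ≥0) (s : Finset ι) :
    natL1Dist (P.map (∑ j ∈ s, X j)) (poissonMeasure (∑ j ∈ s, r j)) ≤
      ∑ j ∈ s, natL1Dist (P.map (X j)) (poissonMeasure (r j)) := by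
  classical
  induction s using Finset.induction_on with
  | empty => simp [Pi.zero_def, Measure.map_const, poissonMeasure_zero, natL1Dist]
  | insert i s hi ih =>
    have hsum : Measurable (∑ j ∈ s, X j) := by
      simpa only [Finset.sum_fn] using s.measurable_sum fun j _ ↦ hX j
    have := Measure.isProbabilityMeasure_map (μ := P) (hX i).aemeasurable
    have := Measure.isProbabilityMeasure_map (μ := P) hsum.aemeasurable
    rw [sum_insert hi, sum_insert hi, sum_insert hi, ← poissonMeasure_conv_poissonMeasure,
      (hind.indepFun_finsetSum_of_notMem hX hi).symm.map_add_eq_map_conv_map (hX i) hsum]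
    exact (natL1Dist_conv_le _ _ _ _).trans (add_le_add_right ih _)

end RandomVariables

/-- Le Cam's inequality: for independent Bernoulli random variables
`ε 1, ..., ε m` with success probabilities `p j`, letting `Σ = ∑ ε j` and
`λ = ∑ p j`, we have `∑ₖ |P(Σ = k) - e^{-λ} λ^k / k!| ≤ 2 ∑ p j ^ 2`. -/
theorem stmt_1 {Ω : Type*} [MeasureSpace Ω] [IsProbabilityMeasure (volume : Measure Ω)]
    (m : ℕ) (ε : Fin m → Ω → ℕ) (p : Fin m → ℝ)
    (hmeas : ∀ j, Measurable (ε j))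
    (hber : ∀ j ω, ε j ω = 0 ∨ ε j ω = 1)
    (hind : iIndepFun ε (volume : Measure Ω))
    (hp : ∀ j, ((volume : Measure Ω) {ω | ε j ω = 1}).toReal = p j) :
    ∑' k : ℕ,
        |((volume : Measure Ω) {ω | ∑ j, ε j ω = k}).toReal -
          Real.exp (-(∑ j, p j)) * (∑ j, p j) ^ k / (Nat.factorial k)|
      ≤ 2 * ∑ j, p j ^ 2 := by
  lift p to Fin m → ℝ≥0 using fun j ↦ hp j ▸ ENNReal.toReal_nonneg
  have hsum : Measurable (∑ j, ε j) := by
    simpa only [Finset.sum_fn] using univ.measurable_sum fun j _ ↦ hmeas j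
  have key := (natL1Dist_map_sum_poissonMeasure_le hmeas hind p univ).trans
    (sum_le_sum fun j _ ↦ natL1Dist_map_poissonMeasure_le (hmeas j) (hber j) (hp j))
  rw [← mul_sum] at key
  refine Eq.trans_le ?_ key
  simp only [natL1Dist, poissonMeasure_real_singleton, NNReal.coe_sum,
    map_measureReal_apply hsum (measurableSet_singleton _)]
  simp only [Set.preimage, Finset.sum_apply, Set.mem_singleton_iff, measureReal_def]
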